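/- Let m, d, e, k be positive integers with e = gcd(m,d) = gcd(m,2d) and 2 ≤ k ≤ (m+e)/(2e), and let C be the Gold type code of relative dimension k, consisting of codewords c_{a⃗} = (Tr_{F_{2^e}/F_2}(Q_{a⃗}(π^{-i})))_{i=0}^{2^m-2} where π is a primitive element of F_{2^m} and Q_{a⃗}(x) = Tr_{F_{2^m}/F_{2^e}}(a_0 x) + Σ_{j=1}^{k-1} Tr_{F_{2^m}/F_{2^e}}(a_j x^{2^{jd}+1}) for a⃗ ∈ F_{2^m}^k. If c ∈ C is nonzero, then DC(c) ∈ {-1} ∪ {-1 ± 2^{(m+e)/2 + je} : j = 0, 1, ..., k-2}, where DC(c) = Σ_i (-1)^{c_i}. -/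

import Mathlib

/-!
Put `f = Tr_{F/𝔽₂} ∘ Q` and `S = ∑_{x ∈ K} (-1)^{f x}`; since `f 0 = 0` and `π⁻¹` runs through
`Kˣ`, `DC(c) = S - 1`. Over `F = 𝔽_{2^e}` the form `Q` is quadratic with polar form
`Tr_{K/F}(x · L u)`, where `L u = ∑ⱼ σ⁻ʲ(aⱼ u) + aⱼ σʲ(u)` and `σ x = x^{2^d}`. Expanding `S²` gives
`S² = |K| ∑_{u ∈ ker L} (-1)^{f u}`, and `f` is additive on `ker L`, so either `S = 0` or
`S² = 2^m · |ker L|`. It remains to see that `w = dim_F ker L` is odd and at most `2k - 2`.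
Since `gcd(m, d) = e`, the fixed field of `σ` is `F`; then a nonzero σ-polynomial `∑_{i ≤ n} cᵢ σⁱ`
has a kernel of dimension at most `n`, and `σ^{k-1} ∘ L` is one of degree `2k - 2`. And
`(u, v) ↦ Tr_{K/F}(L u · v)` is alternating with radical `ker L`, so `m/e - w` is even, while
`m/e` is odd because `gcd(m, 2d) = e`. Hence `w = 2j + 1` with `j ≤ k - 2` and
`S = ±2^{(m+e)/2 + je}`.
-/

open Finset Module LinearMap

section CharacterSums

variable {G : Type*} [AddCommGroup G] [Fintype G]

theorem neg_one_pow_val_add (s t : ZMod 2) :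
    (-1 : ℤ) ^ (s + t).val = (-1) ^ s.val * (-1) ^ t.val := by
  fin_cases s <;> fin_cases t <;> rfl

theorem sum_neg_one_pow_val_eq_ite (φ : G →+ ZMod 2) [Decidable (φ = 0)] :
    ∑ x, (-1 : ℤ) ^ (φ x).val = if φ = 0 then (Fintype.card G : ℤ) else 0 := by
  split_ifs with hφ
  · simp [hφ]
  obtain ⟨x₀, hx₀⟩ := DFunLike.ne_iff.mp hφ
  have h₁ : φ x₀ = 1 := by
    rw [AddMonoidHom.zero_apply] at hx₀
    generalize φ x₀ = t at hx₀ ⊢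
    fin_cases t
    exacts [(hx₀ rfl).elim, rfl]
  have hshift : ∑ x, (-1 : ℤ) ^ (φ (x₀ + x)).val = ∑ x, (-1 : ℤ) ^ (φ x).val :=
    Fintype.sum_equiv (Equiv.addLeft x₀) _ _ fun _ => rfl
  simp only [map_add, h₁, neg_one_pow_val_add, show (-1 : ℤ) ^ (1 : ZMod 2).val = -1 from rfl,
    neg_one_mul, sum_neg_distrib] at hshift
  linarith

theorem sq_sum_neg_one_pow_val (f : G → ZMod 2) (b : G → G →+ ZMod 2)
    (hf : ∀ x u, f (x + u) = f x + f u + b u x) :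
    (∑ x, (-1 : ℤ) ^ (f x).val) ^ 2
      = Fintype.card G * ∑ u with b u = 0, (-1 : ℤ) ^ (f u).val := by
  have hpair : ∀ x u, (-1 : ℤ) ^ (f x).val * (-1) ^ (f (x + u)).val
      = (-1) ^ (f u).val * (-1) ^ (b u x).val := by
    intro x u
    rw [← neg_one_pow_val_add, ← neg_one_pow_val_add, hf, ← add_assoc, ← add_assoc,
      CharTwo.add_self_eq_zero, zero_add]
  calc (∑ x, (-1 : ℤ) ^ (f x).val) ^ 2
      = ∑ x, ∑ u, (-1 : ℤ) ^ (f x).val * (-1) ^ (f (x + u)).val := by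
        rw [sq, sum_mul_sum]
        exact sum_congr rfl fun x _ =>
          (Fintype.sum_equiv (Equiv.addLeft x) _ _ fun _ => rfl).symm
    _ = ∑ u, (-1 : ℤ) ^ (f u).val * ∑ x, (-1) ^ (b u x).val := by
        simp_rw [hpair]
        rw [sum_comm]
        simp_rw [← mul_sum]
    _ = Fintype.card G * ∑ u with b u = 0, (-1 : ℤ) ^ (f u).val := by
        rw [sum_congr rfl fun u _ => by rw [sum_neg_one_pow_val_eq_ite (b u)]]
        simp_rw [mul_ite, mul_zero]
        rw [← sum_filter, mul_sum]
        exact sum_congr rfl fun u _ => mul_comm _ _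

theorem sum_neg_one_pow_val_eq_zero_or (f : G → ZMod 2) (b : G → G →+ ZMod 2)
    (W : AddSubgroup G) (hW : ∀ u, u ∈ W ↔ b u = 0)
    (hf : ∀ x u, f (x + u) = f x + f u + b u x) :
    ∑ x, (-1 : ℤ) ^ (f x).val = 0 ∨
      (∀ u ∈ W, f u = 0) ∧
        (∑ x, (-1 : ℤ) ^ (f x).val) ^ 2 = Fintype.card G * Nat.card W := by
  classical
  let fW : W →+ ZMod 2 :=
    { toFun := fun u => f u
      map_zero' := by simpa using hf 0 0
      map_add' := fun u v => by simp [hf, (hW v).mp v.2] }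
  have hsum : ∑ u with b u = 0, (-1 : ℤ) ^ (f u).val = ∑ u : W, (-1 : ℤ) ^ (fW u).val :=
    sum_subtype _ (fun u => by simp [hW]) _
  rw [← sq_eq_zero_iff, sq_sum_neg_one_pow_val f b hf, hsum, sum_neg_one_pow_val_eq_ite]
  by_cases hfW : fW = 0
  · refine Or.inr ⟨fun u hu => DFunLike.congr_fun hfW ⟨u, hu⟩, ?_⟩
    simp [hfW, Nat.card_eq_fintype_card]
  · simp [hfW]

end CharacterSums

section LinearAlgebra

variable {F V W U : Type*} [Field F] [AddCommGroup V] [Module F V] [AddCommGroup W] [Module F W]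
  [AddCommGroup U] [Module F U]

theorem LinearMap.finrank_ker_comp_le [FiniteDimensional F V] [FiniteDimensional F W]
    (g : W →ₗ[F] U) (f : V →ₗ[F] W) :
    finrank F (ker (g ∘ₗ f)) ≤ finrank F (ker g) + finrank F (ker f) := by
  let h := f.domRestrict (ker (g ∘ₗ f))
  have hrange : range h ≤ ker g := by
    rintro _ ⟨v, rfl⟩
    exact v.2
  have hker : (ker h).map (ker (g ∘ₗ f)).subtype ≤ ker f := by
    rintro _ ⟨v, hv, rfl⟩
    exact hv
  have := h.finrank_range_add_finrank_ker
  have := Submodule.finrank_mono hrange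
  have := Submodule.finrank_mono hker
  rw [Submodule.finrank_map_subtype_eq] at this
  omega

end LinearAlgebra

namespace LinearMap.IsAlt

variable {F V : Type*} [Field F] [AddCommGroup V] [Module F V] {B : V →ₗ[F] V →ₗ[F] F}

theorem finrank_ker_inf_ker_add_two [FiniteDimensional F V] (hB : B.IsAlt) {x y : V}
    (hxy : B x y = 1) :
    finrank F ↥(ker (B x) ⊓ ker (B y)) + 2 = finrank F V := by
  have hyx : B y x = -1 := by rw [← hB.neg, hxy]
  have hsurj : range ((B x).prod (B y)) = ⊤ := by
    refine eq_top_iff.mpr fun st _ => ⟨st.1 • y - st.2 • x, ?_⟩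
    simp [hxy, hyx, hB.self_eq_zero]
  have := ((B x).prod (B y)).finrank_range_add_finrank_ker
  rw [hsurj, finrank_top, finrank_prod, finrank_self, ker_prod] at this
  omega

theorem ker_eq_map_ker_domRestrict₁₂ (hB : B.IsAlt) {x y : V} (hxy : B x y = 1) :
    ker B = (ker (B.domRestrict₁₂ (ker (B x) ⊓ ker (B y)) (ker (B x) ⊓ ker (B y)))).map
      (ker (B x) ⊓ ker (B y)).subtype := by
  have hyx : B y x = -1 := by rw [← hB.neg, hxy]
  have hflip : ∀ z w, B z w = 0 ↔ B w z = 0 := fun z w => hB.eq_iff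
  apply le_antisymm
  · intro z hz
    have hzU : z ∈ ker (B x) ⊓ ker (B y) := by
      simp only [Submodule.mem_inf, mem_ker, hflip x, hflip y, mem_ker.mp hz, zero_apply, and_self]
    refine ⟨⟨z, hzU⟩, ?_, rfl⟩
    ext w
    simp [domRestrict₁₂_apply, mem_ker.mp hz]
  · rintro _ ⟨z, hz, rfl⟩
    obtain ⟨hzx, hzy⟩ := Submodule.mem_inf.mp z.2
    rw [mem_ker] at hzx hzy ⊢
    ext v
    have hvU : v + B y v • x - B x v • y ∈ ker (B x) ⊓ ker (B y) := by
      simp [hxy, hyx, hB.self_eq_zero]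
    have hzv := LinearMap.congr_fun hz ⟨_, hvU⟩
    simpa [domRestrict₁₂_apply, (hflip _ _).mp hzx, (hflip _ _).mp hzy] using hzv

theorem even_finrank_sub_finrank_ker [FiniteDimensional F V] (hB : B.IsAlt) :
    Even (finrank F V - finrank F (ker B)) := by
  induction hn : finrank F V using Nat.strong_induction_on generalizing V with
  | _ n ih =>
    by_cases hB0 : B = 0
    · rw [hB0, ker_zero, finrank_top, hn, Nat.sub_self]
      exact .zero
    obtain ⟨x, y, hxy⟩ : ∃ x y, B x y ≠ 0 := by
      by_contra! h
      exact hB0 (ext₂ h)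
    have hx'y : B ((B x y)⁻¹ • x) y = 1 := by simp [hxy]
    have hU := hB.finrank_ker_inf_ker_add_two hx'y
    rw [hB.ker_eq_map_ker_domRestrict₁₂ hx'y, Submodule.finrank_map_subtype_eq]
    set U := ker (B ((B x y)⁻¹ • x)) ⊓ ker (B y)
    have hBU : (B.domRestrict₁₂ U U).IsAlt := fun u => hB.self_eq_zero u
    obtain ⟨r, hr⟩ := ih _ (by omega) hBU rfl
    have := Submodule.finrank_le (ker (B.domRestrict₁₂ U U))
    exact ⟨r + 1, by omega⟩

end LinearMap.IsAlt

namespace AlgEquiv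

variable {F K : Type*} [Field F] [Field K] [Algebra F K] (σ : K ≃ₐ[F] K)

def skewDegreeLE (n : ℕ) : Submodule K (K →ₗ[F] K) :=
  Submodule.span K ((fun i => (σ ^ i).toLinearMap) '' Set.Iic n)

theorem skewDegreeLE_mono : Monotone σ.skewDegreeLE := fun _ _ h =>
  Submodule.span_mono (Set.image_mono (Set.Iic_subset_Iic.mpr h))

theorem smul_pow_mem_skewDegreeLE (c : K) {i n : ℕ} (h : i ≤ n) :
    c • (σ ^ i).toLinearMap ∈ σ.skewDegreeLE n :=
  Submodule.smul_mem _ c (Submodule.subset_span ⟨i, h, rfl⟩)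

theorem mem_skewDegreeLE_zero {P : K →ₗ[F] K} :
    P ∈ σ.skewDegreeLE 0 ↔ ∃ c : K, c • LinearMap.id = P := by
  have : (fun i => (σ ^ i).toLinearMap) '' Set.Iic 0 = {LinearMap.id} := by
    ext; simp [eq_comm, Module.End.one_eq_id]
  rw [skewDegreeLE, this, Submodule.mem_span_singleton]

theorem mem_skewDegreeLE_succ {P : K →ₗ[F] K} {n : ℕ} :
    P ∈ σ.skewDegreeLE (n + 1) ↔
      ∃ c : K, ∃ R ∈ σ.skewDegreeLE n, P = c • (σ ^ (n + 1)).toLinearMap + R := by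
  rw [skewDegreeLE, ← Order.succ_eq_add_one, Order.Iic_succ, Set.image_insert_eq,
    Submodule.mem_span_insert]
  rfl

theorem comp_mulLeft_mem_skewDegreeLE {P : K →ₗ[F] K} {n : ℕ} (hP : P ∈ σ.skewDegreeLE n)
    (v : K) : P ∘ₗ mulLeft F v ∈ σ.skewDegreeLE n := by
  induction hP using Submodule.span_induction with
  | mem _ h =>
    obtain ⟨i, hi, rfl⟩ := h
    convert σ.smul_pow_mem_skewDegreeLE ((σ ^ i) v) hi using 1
    ext u
    simp
  | zero => simp
  | add _ _ _ _ hP hR => simpa [add_comp] using add_mem hP hR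
  | smul c _ _ hP => simpa [smul_comp] using Submodule.smul_mem _ c hP

theorem exists_eq_comp_sub_one {P : K →ₗ[F] K} {n : ℕ} (hP : P ∈ σ.skewDegreeLE n)
    (hP1 : P 1 = 0) :
    ∃ R ∈ σ.skewDegreeLE (n - 1), P = R ∘ₗ (σ.toLinearMap - LinearMap.id) := by
  induction n generalizing P with
  | zero =>
    obtain ⟨c, rfl⟩ := (σ.mem_skewDegreeLE_zero).mp hP
    obtain rfl : c = 0 := by simpa using hP1
    exact ⟨0, zero_mem _, by simp⟩
  | succ n ih =>
    obtain ⟨c, R, hR, rfl⟩ := σ.mem_skewDegreeLE_succ.mp hP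
    have hR' : R + c • (σ ^ n).toLinearMap ∈ σ.skewDegreeLE n :=
      add_mem hR (σ.smul_pow_mem_skewDegreeLE c le_rfl)
    obtain ⟨R'', hR'', hfac⟩ := ih hR' (by simpa [add_comm] using hP1)
    refine ⟨c • (σ ^ n).toLinearMap + R'',
      add_mem (σ.smul_pow_mem_skewDegreeLE c le_rfl) (σ.skewDegreeLE_mono (by omega) hR''), ?_⟩
    rw [add_comp, ← hfac]
    ext u
    simp [pow_succ, mul_sub]

theorem finrank_ker_sub_one_le (hσ : ∀ x, σ x = x → x ∈ Set.range (algebraMap F K)) :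
    finrank F (ker (σ.toLinearMap - LinearMap.id)) ≤ 1 := by
  have hle : ker (σ.toLinearMap - LinearMap.id) ≤ Submodule.span F {1} := by
    intro x hx
    obtain ⟨c, rfl⟩ := hσ x (by simpa [sub_eq_zero] using hx)
    exact Submodule.mem_span_singleton.mpr ⟨c, (Algebra.algebraMap_eq_smul_one c).symm⟩
  exact (Submodule.finrank_mono hle).trans (finrank_span_singleton one_ne_zero).le

variable [FiniteDimensional F K]

/-- If `P v = 0` with `v ≠ 0`, then `P ∘ (v * ·)` kills `1`, hence factors through `σ - 1`, whose
kernel is `F`; this drops the degree by one at the cost of one dimension. -/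
theorem finrank_ker_le_of_mem_skewDegreeLE (hσ : ∀ x, σ x = x → x ∈ Set.range (algebraMap F K))
    {n : ℕ} {P : K →ₗ[F] K} (hP : P ∈ σ.skewDegreeLE n) (hP0 : P ≠ 0) :
    finrank F (ker P) ≤ n := by
  induction n generalizing P with
  | zero =>
    obtain ⟨c, rfl⟩ := σ.mem_skewDegreeLE_zero.mp hP
    have hc : c ≠ 0 := by rintro rfl; simp at hP0
    have : ker (c • LinearMap.id : K →ₗ[F] K) = ⊥ :=
      ker_eq_bot.mpr fun u v h => mul_left_cancel₀ hc (by simpa using h)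
    simp [this]
  | succ n ih =>
    by_cases hker : ker P = ⊥
    · rw [hker, finrank_bot]
      exact Nat.zero_le _
    obtain ⟨v, hvP, hv⟩ := Submodule.exists_mem_ne_zero_of_ne_bot hker
    obtain ⟨R, hR, hfac⟩ := σ.exists_eq_comp_sub_one (σ.comp_mulLeft_mem_skewDegreeLE hP v)
      (by simpa using hvP)
    have hPR : P = R ∘ₗ (σ.toLinearMap - LinearMap.id) ∘ₗ mulLeft F v⁻¹ := by
      rw [← comp_assoc, ← hfac]
      ext u
      simp [hv]
    have hR0 : R ≠ 0 := by rintro rfl; simp [hPR] at hP0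
    have hmul : ker (mulLeft F v⁻¹) = ⊥ := ker_eq_bot.mpr (mul_right_injective₀ (inv_ne_zero hv))
    calc finrank F (ker P)
        ≤ finrank F (ker (R ∘ₗ (σ.toLinearMap - LinearMap.id)))
            + finrank F (ker (mulLeft F v⁻¹)) := by
          rw [hPR, ← comp_assoc]
          exact finrank_ker_comp_le _ _
      _ ≤ finrank F (ker R) + finrank F (ker (σ.toLinearMap - LinearMap.id)) + 0 := by
          rw [hmul, finrank_bot]
          exact Nat.add_le_add_right (finrank_ker_comp_le _ _) 0
      _ ≤ n + 1 := by
          have := ih hR hR0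
          have := σ.finrank_ker_sub_one_le hσ
          omega

end AlgEquiv

section TraceForm

variable {F K : Type*} [Field F] [Field K] [Algebra F K]

theorem trace_trace_mul_eq_zero_iff (A : Type*) [Field A] [Algebra A F] [FiniteDimensional A F]
    [FiniteDimensional F K] [Algebra.IsSeparable A F] [Algebra.IsSeparable F K] {z : K} :
    (∀ x, Algebra.trace A F (Algebra.trace F K (x * z)) = 0) ↔ z = 0 := by
  refine ⟨fun h => ?_, by rintro rfl x; simp⟩
  refine (traceForm_nondegenerate F K).1 z fun x => ?_
  refine (traceForm_nondegenerate A F).1 _ fun c => ?_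
  have hcx := h (c • x)
  rwa [smul_mul_assoc, map_smul, smul_eq_mul, mul_comm, mul_comm x] at hcx

theorem even_finrank_sub_finrank_ker_of_polar [CharP F 2] [FiniteDimensional F K]
    [Algebra.IsSeparable F K] (Q : K → F) (L : K →ₗ[F] K)
    (hQ : ∀ x u, Q (x + u) = Q x + Q u + Algebra.trace F K (x * L u)) :
    Even (finrank F K - finrank F (ker L)) := by
  have : CharP K 2 := charP_of_injective_algebraMap (algebraMap F K).injective 2
  have hQ0 : Q 0 = 0 := by simpa using hQ 0 0
  have hB : (Algebra.traceForm F K ∘ₗ L).IsAlt := fun u => by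
    have h := hQ u u
    rw [CharTwo.add_self_eq_zero u, CharTwo.add_self_eq_zero (Q u), zero_add, hQ0] at h
    simp [Algebra.traceForm_apply, mul_comm, ← h]
  have hker : ker (Algebra.traceForm F K ∘ₗ L) = ker L := by
    rw [ker_comp, (traceForm_nondegenerate F K).ker_eq_bot, Submodule.comap_bot]
  rw [← hker]
  exact hB.even_finrank_sub_finrank_ker

theorem sum_neg_one_pow_trace_eq_zero_or [Fintype F] [Fintype K] [Algebra (ZMod 2) F]
    (Q : K → F) (L : K →ₗ[F] K)
    (hQ : ∀ x u, Q (x + u) = Q x + Q u + Algebra.trace F K (x * L u)) :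
    ∑ x, (-1 : ℤ) ^ (Algebra.trace (ZMod 2) F (Q x)).val = 0 ∨
      (∀ u ∈ ker L, Algebra.trace (ZMod 2) F (Q u) = 0) ∧
        (∑ x, (-1 : ℤ) ^ (Algebra.trace (ZMod 2) F (Q x)).val) ^ 2
          = Fintype.card K * Fintype.card F ^ finrank F (ker L) := by
  let b : K → K →+ ZMod 2 := fun u =>
    ((Algebra.trace (ZMod 2) F).toAddMonoidHom.comp (Algebra.trace F K).toAddMonoidHom).comp
      (AddMonoidHom.mulRight (L u))
  have hW : ∀ u, u ∈ (ker L).toAddSubgroup ↔ b u = 0 := fun u => by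
    rw [Submodule.mem_toAddSubgroup, mem_ker, ← trace_trace_mul_eq_zero_iff (F := F) (ZMod 2),
      DFunLike.ext_iff]
    rfl
  have hf : ∀ x u, Algebra.trace (ZMod 2) F (Q (x + u))
      = Algebra.trace (ZMod 2) F (Q x) + Algebra.trace (ZMod 2) F (Q u) + b u x := fun x u => by
    simp [hQ, b]
  refine (sum_neg_one_pow_val_eq_zero_or _ b _ hW hf).imp_right fun ⟨h0, hS⟩ => ⟨h0, ?_⟩
  rw [hS, ← Nat.card_eq_fintype_card (α := F)]
  exact_mod_cast congrArg _ (natCard_eq_pow_finrank (K := F) (V := ker L))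

end TraceForm

theorem FiniteField.mem_range_algebraMap_of_frobenius_pow_apply_eq_self {F K : Type*} [Field F]
    [Field K] [Algebra F K] [Fintype F] [Finite K] {t : ℕ} (ht : t.Coprime (finrank F K)) {x : K}
    (hx : (frobeniusAlgEquivOfAlgebraic F K ^ t) x = x) : x ∈ Set.range (algebraMap F K) := by
  set φ := frobeniusAlgEquivOfAlgebraic F K
  have hφ : φ ∈ Subgroup.zpowers (φ ^ t) := by
    rwa [mem_zpowers_pow_iff, orderOf_frobeniusAlgEquivOfAlgebraic]
  have hstab : Subgroup.zpowers (φ ^ t) ≤ MulAction.stabilizer _ x :=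
    Subgroup.zpowers_le.mpr hx
  rw [IsGalois.mem_range_algebraMap_iff_fixed]
  intro g
  obtain ⟨n, rfl⟩ := (bijective_frobeniusAlgEquivOfAlgebraic_pow F K).2 g
  exact hstab (Subgroup.pow_mem _ hφ _)

theorem exists_algEquiv_apply_eq_pow_two_pow {F K : Type*} [Field F] [Field K] [Algebra F K]
    [Fintype F] [Fintype K] {m d e : ℕ} (he : 0 < e) (he1 : e = Nat.gcd m d)
    (hF : Fintype.card F = 2 ^ e) (hm : m = e * finrank F K) :
    ∃ σ : K ≃ₐ[F] K, (∀ x, σ x = x ^ 2 ^ d) ∧ ∀ x, σ x = x → x ∈ Set.range (algebraMap F K) := by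
  have hed : e * (d / e) = d := Nat.mul_div_cancel' (he1 ▸ Nat.gcd_dvd_right m d)
  have hcop : (d / e).Coprime (finrank F K) := by
    have := Nat.coprime_div_gcd_div_gcd (he1 ▸ he : 0 < m.gcd d)
    rw [← he1, hm, Nat.mul_div_cancel_left _ he] at this
    exact this.symm
  refine ⟨FiniteField.frobeniusAlgEquivOfAlgebraic F K ^ (d / e), fun x => ?_,
    fun x => FiniteField.mem_range_algebraMap_of_frobenius_pow_apply_eq_self hcop⟩
  rw [AlgEquiv.coe_pow, FiniteField.coe_frobeniusAlgEquivOfAlgebraic_iterate, hF, ← pow_mul, hed]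

theorem eq_mul_finrank_of_card_eq {F K : Type*} [Field F] [Field K] [Algebra F K] [Fintype F]
    [Fintype K] {m e : ℕ} (hF : Fintype.card F = 2 ^ e) (hK : Fintype.card K = 2 ^ m) :
    m = e * finrank F K := by
  apply Nat.pow_right_injective le_rfl
  simp only [pow_mul, ← hF, ← hK]
  exact card_eq_pow_finrank

theorem odd_of_gcd_eq_gcd_two_mul {m d e n : ℕ} (he : 0 < e) (he1 : e = Nat.gcd m d)
    (he2 : e = Nat.gcd m (2 * d)) (hm : m = e * n) : Odd n := by
  refine Nat.not_even_iff_odd.mp fun ⟨r, hr⟩ => ?_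
  have h2e : 2 * e ∣ Nat.gcd m (2 * d) :=
    Nat.dvd_gcd ⟨r, by rw [hm, hr]; ring⟩ (mul_dvd_mul_left 2 (he1 ▸ Nat.gcd_dvd_right m d))
  rw [← he2] at h2e
  have := Nat.le_of_dvd he h2e
  omega

theorem sum_fin_pow_eq_sum_sub {K M : Type*} [Field K] [Fintype K] [AddCommGroup M] {x : K}
    {n : ℕ} (hx : orderOf x = n) (hK : Fintype.card K = n + 1) (g : K → M) :
    ∑ i : Fin n, g (x ^ (i : ℕ)) = ∑ y, g y - g 0 := by
  classical
  have hinj : Set.InjOn (x ^ ·) (Finset.range n) := by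
    simpa [← hx, Set.InjOn] using pow_injOn_Iio_orderOf (x := x)
  have hx0 : x ≠ 0 := by
    rintro rfl
    have := pow_orderOf_eq_one (0 : K)
    rw [hx, zero_pow (by have := Fintype.one_lt_card (α := K); omega)] at this
    exact zero_ne_one this
  have himage : (Finset.range n).image (x ^ ·) = univ.erase 0 := by
    refine eq_of_subset_of_card_le (fun y hy => ?_) ?_
    · obtain ⟨i, -, rfl⟩ := mem_image.mp hy
      exact mem_erase.mpr ⟨pow_ne_zero _ hx0, mem_univ _⟩
    · rw [card_image_of_injOn hinj, card_erase_of_mem (mem_univ _), card_univ, hK, card_range]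
      rfl
  rw [Fin.sum_univ_eq_sum_range (fun i => g (x ^ i)), ← sum_erase_eq_sub (mem_univ 0), ← himage,
    sum_image hinj]

theorem eq_two_pow_or_eq_neg_two_pow_of_sq_eq {S : ℤ} {m e n j : ℕ} (hm : m = e * n)
    (hn : Odd n) (hS : S ^ 2 = 2 ^ m * (2 ^ e) ^ (2 * j + 1)) :
    S = 2 ^ ((m + e) / 2 + j * e) ∨ S = -2 ^ ((m + e) / 2 + j * e) := by
  obtain ⟨q, rfl⟩ := hn
  have hme : (m + e) / 2 = e * (q + 1) :=
    Nat.div_eq_of_eq_mul_left two_pos (by rw [hm]; ring)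
  rw [← sq_eq_sq_iff_eq_or_eq_neg, hS, hme, ← pow_mul, ← pow_mul, ← pow_add, hm]
  ring_nf

section GoldOperator

variable {F K : Type*} [Field F] [Field K] [Algebra F K] (σ : K ≃ₐ[F] K) {k : ℕ} (a : Fin k → K)

noncomputable def goldOperator : K →ₗ[F] K :=
  ∑ j : Fin k, ((σ ^ (j : ℕ)).symm.toLinearMap ∘ₗ mulLeft F (a j)
    + mulLeft F (a j) ∘ₗ (σ ^ (j : ℕ)).toLinearMap)

theorem goldOperator_apply (u : K) :
    goldOperator σ a u = ∑ j : Fin k, ((σ ^ (j : ℕ)).symm (a j * u) + a j * (σ ^ (j : ℕ)) u) := by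
  simp [goldOperator]

theorem trace_mul_mul_apply_add (τ : K ≃ₐ[F] K) (c x u : K) :
    Algebra.trace F K (c * (x + u) * τ (x + u)) = Algebra.trace F K (c * x * τ x)
      + Algebra.trace F K (c * u * τ u) + Algebra.trace F K (x * (τ.symm (c * u) + c * τ u)) := by
  have hτ : Algebra.trace F K (c * u * τ x) = Algebra.trace F K (x * τ.symm (c * u)) := by
    rw [← Algebra.trace_eq_of_algEquiv τ.symm, map_mul, AlgEquiv.symm_apply_apply, mul_comm]
  simp only [map_add, mul_add, add_mul, hτ]
  ring_nf

theorem goldForm_apply_add [CharP K 2] {d : ℕ} (hσ : ∀ x, σ x = x ^ 2 ^ d) (Q : K → F)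
    (hQ : ∀ x, Q x = ∑ j : Fin k,
      (if (j : ℕ) = 0 then Algebra.trace F K (a j * x)
       else Algebra.trace F K (a j * x ^ (2 ^ ((j : ℕ) * d) + 1))))
    (x u : K) :
    Q (x + u) = Q x + Q u + Algebra.trace F K (x * goldOperator σ a u) := by
  have hσpow : ∀ (j : ℕ) (y : K), y ^ (2 ^ (j * d) + 1) = y * (σ ^ j) y := by
    intro j y
    rw [AlgEquiv.coe_pow, show ⇑σ = (· ^ 2 ^ d) from funext hσ, pow_iterate, ← pow_mul, mul_comm d,
      pow_succ, mul_comm]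
  rw [hQ, hQ, hQ, goldOperator_apply, mul_sum, map_sum, ← sum_add_distrib, ← sum_add_distrib]
  refine sum_congr rfl fun j _ => ?_
  split_ifs with hj
  · have h0 : (σ ^ (j : ℕ)).symm (a j * u) + a j * (σ ^ (j : ℕ)) u = 0 := by
      rw [hj, pow_zero]
      exact CharTwo.add_self_eq_zero (a j * u)
    rw [h0, mul_zero, map_zero, add_zero, mul_add, map_add]
  · simp only [hσpow, ← mul_assoc]
    exact trace_mul_mul_apply_add _ _ _ _

theorem mem_skewDegreeLE_pow_comp_goldOperator :
    (σ ^ (k - 1)).toLinearMap ∘ₗ goldOperator σ a ∈ σ.skewDegreeLE (2 * k - 2) := by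
  have hL : (σ ^ (k - 1)).toLinearMap ∘ₗ goldOperator σ a = ∑ j : Fin k,
      ((σ ^ (k - 1 - j)) (a j) • (σ ^ (k - 1 - j)).toLinearMap
        + (σ ^ (k - 1)) (a j) • (σ ^ (k - 1 + j)).toLinearMap) := by
    ext u
    simp only [comp_apply, goldOperator_apply, map_sum, LinearMap.sum_apply, LinearMap.add_apply,
      LinearMap.smul_apply, AlgEquiv.toLinearMap_apply, smul_eq_mul, map_add]
    refine sum_congr rfl fun j _ => congr_arg₂ (· + ·) ?_ ?_
    · rw [← pow_sub_mul_pow σ (by omega : (j : ℕ) ≤ k - 1), AlgEquiv.mul_apply,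
        AlgEquiv.apply_symm_apply, map_mul]
    · rw [map_mul, pow_add, AlgEquiv.mul_apply]
  rw [hL]
  exact sum_mem fun j _ => add_mem (σ.smul_pow_mem_skewDegreeLE _ (by omega))
    (σ.smul_pow_mem_skewDegreeLE _ (by omega))

theorem finrank_ker_goldOperator_le [FiniteDimensional F K]
    (hσ : ∀ x, σ x = x → x ∈ Set.range (algebraMap F K)) (ha : goldOperator σ a ≠ 0) :
    finrank F (ker (goldOperator σ a)) ≤ 2 * k - 2 := by
  have hne : (σ ^ (k - 1)).toLinearMap ∘ₗ goldOperator σ a ≠ 0 := fun h =>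
    ha (ext fun u => (σ ^ (k - 1)).injective (by simpa using LinearMap.congr_fun h u))
  exact (Submodule.finrank_mono (ker_le_ker_comp _ _)).trans
    (σ.finrank_ker_le_of_mem_skewDegreeLE hσ (mem_skewDegreeLE_pow_comp_goldOperator σ a) hne)

end GoldOperator

theorem gold_code_dc_values_general (m d e k : ℕ)
    (he : 0 < e)
    (he1 : e = Nat.gcd m d) (he2 : e = Nat.gcd m (2 * d))
    (F K : Type*) [Field F] [Field K] [Algebra F K] [Fintype F] [Fintype K]
    [Algebra (ZMod 2) F]
    (hF : Fintype.card F = 2 ^ e) (hK : Fintype.card K = 2 ^ m)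
    (π : K) (hπ : orderOf π = 2 ^ m - 1)
    (a : Fin k → K)
    (Q : K → F)
    (hQ : ∀ x, Q x = ∑ j : Fin k,
      (if (j : ℕ) = 0 then Algebra.trace F K (a j * x)
       else Algebra.trace F K (a j * x ^ (2 ^ ((j : ℕ) * d) + 1))))
    (c : Fin (2 ^ m - 1) → ZMod 2)
    (hc : ∀ i, c i = Algebra.trace (ZMod 2) F (Q (π⁻¹ ^ (i : ℕ))))
    (hc0 : c ≠ 0) :
    (∑ i : Fin (2 ^ m - 1), (-1 : ℤ) ^ (c i).val) = -1 ∨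
      ∃ j ≤ k - 2,
        (∑ i : Fin (2 ^ m - 1), (-1 : ℤ) ^ (c i).val) = -1 + 2 ^ ((m + e) / 2 + j * e) ∨
        (∑ i : Fin (2 ^ m - 1), (-1 : ℤ) ^ (c i).val) = -1 - 2 ^ ((m + e) / 2 + j * e) := by
  have : CharP F 2 := charP_of_injective_algebraMap (algebraMap (ZMod 2) F).injective 2
  have : CharP K 2 := charP_of_injective_algebraMap (algebraMap F K).injective 2
  have hmK := eq_mul_finrank_of_card_eq (F := F) (K := K) hF hK
  have hodd := odd_of_gcd_eq_gcd_two_mul he he1 he2 hmK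
  obtain ⟨σ, hσ, hfix⟩ := exists_algEquiv_apply_eq_pow_two_pow he he1 hF hmK
  have hpolar := goldForm_apply_add σ a hσ Q hQ
  have hπ' : orderOf π⁻¹ = 2 ^ m - 1 :=
    hπ ▸ orderOf_eq_orderOf_iff.mpr fun n => by rw [inv_pow, inv_eq_one]
  have hQ0 : Q 0 = 0 := by simpa using hpolar 0 0
  simp_rw [hc, sum_fin_pow_eq_sum_sub hπ' (by have := Nat.one_le_two_pow (n := m); omega)
    (fun x => (-1 : ℤ) ^ (Algebra.trace (ZMod 2) F (Q x)).val), hQ0, map_zero, ZMod.val_zero,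
    pow_zero]
  rcases sum_neg_one_pow_trace_eq_zero_or Q _ hpolar with hS | ⟨hker, hS⟩
  · exact .inl (by rw [hS, zero_sub])
  have hL : goldOperator σ a ≠ 0 := fun hL =>
    hc0 (funext fun i => (hc i).trans (hker _ (by simp [hL])))
  obtain ⟨j, hj⟩ : Odd (finrank F (LinearMap.ker (goldOperator σ a))) := by
    have := Nat.Odd.sub_even (Nat.sub_le _ _) hodd
      (even_finrank_sub_finrank_ker_of_polar Q _ hpolar)
    rwa [Nat.sub_sub_self (Submodule.finrank_le _)] at this
  have hw := finrank_ker_goldOperator_le σ a hfix hL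
  rw [hK, hF, hj] at hS
  push_cast at hS
  refine .inr ⟨j, by omega, ?_⟩
  rcases eq_two_pow_or_eq_neg_two_pow_of_sq_eq hmK hodd hS with h | h
  · exact .inl (by rw [h, sub_eq_neg_add])
  · exact .inr (by rw [h, sub_eq_neg_add, sub_eq_add_neg])

/-- DC components of nonzero codewords of the Gold type code of relative
dimension `k` lie in `{-1} ∪ {-1 ± 2^{(m+e)/2 + je} : j = 0,…,k-2}`. -/
theorem gold_code_dc_values (m d e k : ℕ)
    (hm : 0 < m) (hd : 0 < d) (he : 0 < e)
    (he1 : e = Nat.gcd m d) (he2 : e = Nat.gcd m (2 * d))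
    (hk1 : 2 ≤ k) (hk2 : k ≤ (m + e) / (2 * e))
    (F K : Type*) [Field F] [Field K] [Algebra F K] [Fintype F] [Fintype K]
    [Algebra (ZMod 2) F]
    (hF : Fintype.card F = 2 ^ e) (hK : Fintype.card K = 2 ^ m)
    (π : K) (hπ : orderOf π = 2 ^ m - 1)
    (a : Fin k → K)
    (Q : K → F)
    (hQ : ∀ x, Q x = ∑ j : Fin k,
      (if (j : ℕ) = 0 then Algebra.trace F K (a j * x)
       else Algebra.trace F K (a j * x ^ (2 ^ ((j : ℕ) * d) + 1))))
    (c : Fin (2 ^ m - 1) → ZMod 2)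
    (hc : ∀ i, c i = Algebra.trace (ZMod 2) F (Q (π⁻¹ ^ (i : ℕ))))
    (hc0 : c ≠ 0) :
    (∑ i : Fin (2 ^ m - 1), (-1 : ℤ) ^ (c i).val) = -1 ∨
      ∃ j ≤ k - 2,
        (∑ i : Fin (2 ^ m - 1), (-1 : ℤ) ^ (c i).val) = -1 + 2 ^ ((m + e) / 2 + j * e) ∨
        (∑ i : Fin (2 ^ m - 1), (-1 : ℤ) ^ (c i).val) = -1 - 2 ^ ((m + e) / 2 + j * e) :=
  gold_code_dc_values_general m d e k he he1 he2 F K hF hK π hπ a Q hQ c hc hc0
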